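/- There exist locally finite positive Borel measures ω, σ on ℝ satisfying the classical two-weight A_2 condition sup_I ω(I)σ(I)/|I|² < ∞ but for which both one-tailed A_2 conditions fail: sup_I (ω(I)/|I|) P(I,σ) = ∞ and sup_I (σ(I)/|I|) P(I,ω) = ∞. -/

import Mathlib

open MeasureTheory ENNReal

/-- An interval in `ℝ` given by its center and (positive) half-length. -/
structure RInterval where
  c : ℝ
  r : ℝ
  hr : 0 < r

namespace RInterval

def set (I : RInterval) : Set ℝ := Set.Ico (I.c - I.r) (I.c + I.r)

noncomputable def len (I : RInterval) : ℝ := 2 * I.r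

end RInterval

/-- The one-dimensional Poisson integral `P(I,ω) = ∫ |I|/(|I|+dist(x,I))² dω(x)`. -/
noncomputable def poisson (I : RInterval) (ω : Measure ℝ) : ℝ≥0∞ :=
  ∫⁻ x, ENNReal.ofReal (I.len / (I.len + Metric.infDist x I.set) ^ 2) ∂ω

/-!
Both measures are discrete stand-ins for the paper's `u_k`, `v_k^n`. At the sparse scales
`c_k = scale k = 2 ^ 4 ^ (k + 2)`, `ω` has a light atom of mass `2⁻ᵏ` at `-c_k` and a heavy cluster of atoms
of mass `4ⁱ` at `c_k + 2ⁱ` (`i ≤ 4ᵏ`); `σ` is the reflection of `ω`.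

On the unit interval centred at a light atom, each of the `4ᵏ + 1` atoms of the reflected cluster
contributes about `1/4` to the Poisson integral, so the one-tailed quantities are at least
`2⁻ᵏ 4ᵏ / 4 → ∞`. The `A_2` quantity stays bounded because a cluster's mass is tiny compared
to its scale: an interval containing `0` sees only blocks at scales up to its length, so both
measures grow linearly in it; an interval on one side of `0` sees light atoms of only one measure,
and next to a light atom at `c_K` it carries heavy mass `≲ |I|²`, since `∑_{2ⁱ ≤ |I|} 4ⁱ ≤ 2 |I|²`
and every other cluster it meets is at distance comparable to its own scale.
-/

open Set Metric

namespace RInterval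

noncomputable def unitAt (x : ℝ) : RInterval := ⟨x, 2⁻¹, by norm_num⟩

lemma len_unitAt (x : ℝ) : (unitAt x).len = 1 := by norm_num [unitAt, len]

lemma mem_set_unitAt (x : ℝ) : x ∈ (unitAt x).set := by norm_num [unitAt, set]

end RInterval

namespace OneTailedA2

open RInterval

lemma apply_le_of_univ_le {α : Type*} [MeasurableSpace α] {μ : Measure α} {s : Set α} {c L : ℝ}
    {k : ℕ} (hμ : μ univ ≤ ENNReal.ofReal c * 2⁻¹ ^ (k + 1)) (hs : μ s ≠ 0 → c ≤ 2 * L) :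
    μ s ≤ ENNReal.ofReal L * 2⁻¹ ^ k := by
  by_cases h0 : μ s = 0
  · simp [h0]
  calc μ s ≤ μ univ := measure_mono (subset_univ s)
    _ ≤ ENNReal.ofReal (2 * L) * 2⁻¹ ^ (k + 1) := hμ.trans (by gcongr; exact hs h0)
    _ = ENNReal.ofReal L * 2⁻¹ ^ k := by
        rw [ENNReal.ofReal_mul zero_le_two, ENNReal.ofReal_ofNat, mul_comm 2, mul_assoc, pow_succ',
          ← mul_assoc 2, ENNReal.mul_inv_cancel two_ne_zero ofNat_ne_top, one_mul]

lemma sum_apply_le_of_univ_le {α : Type*} [MeasurableSpace α] {μ : ℕ → Measure α} {s : Set α}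
    (hs : MeasurableSet s) {c : ℕ → ℝ} {L : ℝ}
    (hμ : ∀ k, μ k univ ≤ ENNReal.ofReal (c k) * 2⁻¹ ^ (k + 1))
    (hc : ∀ k, μ k s ≠ 0 → c k ≤ 2 * L) :
    Measure.sum μ s ≤ 2 * ENNReal.ofReal L := by
  calc Measure.sum μ s = ∑' k, μ k s := Measure.sum_apply μ hs
    _ ≤ ∑' k, ENNReal.ofReal L * 2⁻¹ ^ k :=
        ENNReal.tsum_le_tsum fun k => apply_le_of_univ_le (hμ k) (hc k)
    _ = 2 * ENNReal.ofReal L := by rw [ENNReal.tsum_mul_left, ENNReal.tsum_geometric_two, mul_comm]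

lemma map_neg_apply_le (μ : Measure ℝ) {s : Set ℝ} (hs : MeasurableSet s) {a b : ℝ}
    (h : s ⊆ Icc a b) : μ.map Neg.neg s ≤ μ (Icc (-b) (-a)) := by
  rw [Measure.map_apply measurable_neg hs]
  exact measure_mono fun x hx => ⟨by linarith [(h hx).2], by linarith [(h hx).1]⟩

lemma isLocallyFiniteMeasure_of_Icc {μ : Measure ℝ} (h : ∀ L, μ (Icc (-L) L) < ⊤) :
    IsLocallyFiniteMeasure μ :=
  ⟨fun x => ⟨Icc (-(|x| + 1)) (|x| + 1),
    Icc_mem_nhds (by linarith [neg_abs_le x]) (by linarith [le_abs_self x]), h _⟩⟩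

section Cluster

variable (y : ℕ → ℝ) (n : ℕ)

noncomputable def cluster : Measure ℝ :=
  ∑ i ∈ Finset.range (n + 1), (4 : ℝ≥0∞) ^ i • Measure.dirac (y i)

lemma cluster_apply (s : Set ℝ) :
    cluster y n s = ∑ i ∈ Finset.range (n + 1), 4 ^ i * s.indicator 1 (y i) := by
  simp [cluster, Measure.finsetSum_apply]

lemma lintegral_cluster (f : ℝ → ℝ≥0∞) :
    ∫⁻ x, f x ∂cluster y n = ∑ i ∈ Finset.range (n + 1), 4 ^ i * f (y i) := by
  simp [cluster, lintegral_finsetSum_measure]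

lemma map_neg_cluster : (cluster y n).map Neg.neg = cluster (fun i => -y i) n := by
  ext s hs
  rw [Measure.map_apply measurable_neg hs, cluster_apply, cluster_apply]
  rfl

variable {y n}

lemma exists_mem_of_cluster_apply_ne_zero {s : Set ℝ} (h : cluster y n s ≠ 0) :
    ∃ i ≤ n, y i ∈ s := by
  contrapose! h
  rw [cluster_apply]
  refine Finset.sum_eq_zero fun i hi => ?_
  rw [indicator_of_notMem (h i (Nat.lt_succ_iff.1 (Finset.mem_range.1 hi))), mul_zero]

end Cluster

lemma sum_four_pow_le (L : ℝ) (n : ℕ) :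
    ∑ i ∈ Finset.range (n + 1), (if (2 : ℝ) ^ i ≤ L then (4 : ℝ) ^ i else 0) ≤ 2 * 4 ^ n ∧
      ∑ i ∈ Finset.range (n + 1), (if (2 : ℝ) ^ i ≤ L then (4 : ℝ) ^ i else 0) ≤ 2 * L ^ 2 := by
  induction n with
  | zero =>
    simp only [zero_add, Finset.sum_range_one, pow_zero]
    split_ifs with h <;> constructor <;> nlinarith
  | succ n ih =>
    rw [Finset.sum_range_succ]
    split_ifs with h
    · have h4 : (4 : ℝ) ^ (n + 1) ≤ L ^ 2 := by
        rw [show (4 : ℝ) = 2 ^ 2 by norm_num, ← pow_mul, mul_comm, pow_mul]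
        exact pow_le_pow_left₀ (by positivity) h 2
      rw [pow_succ] at h4 ⊢
      constructor <;> linarith [ih.1, ih.2, pow_nonneg (show (0 : ℝ) ≤ 4 by norm_num) n]
    · rw [add_zero, pow_succ]
      exact ⟨by linarith [ih.1, pow_nonneg (show (0 : ℝ) ≤ 4 by norm_num) n], ih.2⟩

lemma cluster_Icc_le {x a : ℝ} (hax : a ≤ x) (n : ℕ) (b : ℝ) :
    cluster (fun i => x + 2 ^ i) n (Icc a b) ≤ 2 * ENNReal.ofReal ((b - a) ^ 2) := by
  rw [cluster_apply]
  calc _ ≤ ∑ i ∈ Finset.range (n + 1),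
        ENNReal.ofReal (if (2 : ℝ) ^ i ≤ b - a then (4 : ℝ) ^ i else 0) := by
        gcongr with i
        by_cases hmem : x + 2 ^ i ∈ Icc a b
        · rw [indicator_of_mem hmem, Pi.one_apply, mul_one, if_pos (by linarith [hmem.2]),
            ENNReal.ofReal_pow (by norm_num), ENNReal.ofReal_ofNat]
        · rw [indicator_of_notMem hmem, mul_zero]
          exact zero_le
    _ = ENNReal.ofReal (∑ i ∈ Finset.range (n + 1),
          if (2 : ℝ) ^ i ≤ b - a then (4 : ℝ) ^ i else 0) :=
        (ENNReal.ofReal_sum_of_nonneg fun i _ => by split_ifs <;> positivity).symm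
    _ ≤ ENNReal.ofReal (2 * (b - a) ^ 2) := ENNReal.ofReal_le_ofReal (sum_four_pow_le _ n).2
    _ = 2 * ENNReal.ofReal ((b - a) ^ 2) := by
        rw [ENNReal.ofReal_mul zero_le_two, ENNReal.ofReal_ofNat]

lemma inv_four_le_four_pow_mul {d : ℝ} (hd₀ : 0 ≤ d) {i : ℕ} (hd : d ≤ 2 ^ i) :
    (4 : ℝ≥0∞)⁻¹ ≤ 4 ^ i * ENNReal.ofReal (1 / (1 + d) ^ 2) := by
  have h2i : (1 : ℝ) ≤ 2 ^ i := one_le_pow₀ one_le_two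
  have h4 : (4 : ℝ) ^ i * (1 / (2 * 2 ^ i) ^ 2) = 4⁻¹ := by
    rw [mul_pow, ← pow_mul, mul_comm i, pow_mul]
    field_simp
    ring
  calc (4 : ℝ≥0∞)⁻¹ = ENNReal.ofReal (4 ^ i * (1 / (2 * 2 ^ i) ^ 2)) := by
        rw [h4, ENNReal.ofReal_inv_of_pos (by norm_num), ENNReal.ofReal_ofNat]
    _ ≤ ENNReal.ofReal (4 ^ i * (1 / (1 + d) ^ 2)) := by
        gcongr
        linarith
    _ = 4 ^ i * ENNReal.ofReal (1 / (1 + d) ^ 2) := by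
        rw [ENNReal.ofReal_mul (by positivity), ENNReal.ofReal_pow (by norm_num),
          ENNReal.ofReal_ofNat]

lemma le_poisson_cluster {x : ℝ} {y : ℕ → ℝ} (hy : ∀ i, dist (y i) x ≤ 2 ^ i) (n : ℕ) :
    (n + 1 : ℝ≥0∞) * 4⁻¹ ≤ poisson (unitAt x) (cluster y n) := by
  rw [poisson, lintegral_cluster, len_unitAt]
  calc (n + 1 : ℝ≥0∞) * 4⁻¹ = ∑ _i ∈ Finset.range (n + 1), (4 : ℝ≥0∞)⁻¹ := by simp
    _ ≤ _ := Finset.sum_le_sum fun i _ => inv_four_le_four_pow_mul infDist_nonneg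
        ((infDist_le_dist_of_mem (mem_set_unitAt x)).trans (hy i))

theorem iSup_mul_poisson_eq_top {μ ν : Measure ℝ} {x : ℕ → ℝ} {y : ℕ → ℕ → ℝ}
    (hμ : ∀ k, (2⁻¹ : ℝ≥0∞) ^ k ≤ μ {x k}) (hν : ∀ k, cluster (y k) (4 ^ k) ≤ ν)
    (hy : ∀ k i, dist (y k i) (x k) ≤ 2 ^ i) :
    ⨆ I : RInterval, μ I.set / ENNReal.ofReal I.len * poisson I ν = ⊤ := by
  refine top_unique (ENNReal.iSup_natCast ▸ iSup_le fun n => le_iSup_of_le (unitAt (x (n + 2))) ?_)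
  set k := n + 2
  have hpoisson : (4 : ℝ≥0∞) ^ k * 4⁻¹ ≤ poisson (unitAt (x k)) ν :=
    calc (4 : ℝ≥0∞) ^ k * 4⁻¹ ≤ (4 ^ k + 1) * 4⁻¹ := by gcongr; exact le_self_add
      _ ≤ poisson (unitAt (x k)) (cluster (y k) (4 ^ k)) := by
          exact_mod_cast le_poisson_cluster (hy k) (4 ^ k)
      _ ≤ _ := lintegral_mono' (hν k) le_rfl
  calc (n : ℝ≥0∞) ≤ 2 ^ n := by exact_mod_cast (Nat.lt_two_pow_self).le
    _ = 2⁻¹ ^ k * (4 ^ k * 4⁻¹) := by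
        have h : (2⁻¹ : ℝ≥0∞) * 4 = 2 := by
          rw [show (4 : ℝ≥0∞) = 2 * 2 by norm_num, ← mul_assoc,
            ENNReal.inv_mul_cancel two_ne_zero ofNat_ne_top, one_mul]
        rw [← mul_assoc, ← mul_pow, h, pow_add, mul_assoc, show (2 : ℝ≥0∞) ^ 2 = 4 by norm_num,
          ENNReal.mul_inv_cancel four_ne_zero ofNat_ne_top, mul_one]
    _ ≤ μ (unitAt (x k)).set / ENNReal.ofReal (unitAt (x k)).len * poisson (unitAt (x k)) ν := by
        rw [len_unitAt, ENNReal.ofReal_one, div_one]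
        exact mul_le_mul' ((hμ k).trans (measure_mono (singleton_subset_iff.2 (mem_set_unitAt _))))
          hpoisson

noncomputable def scale (k : ℕ) : ℝ := 2 ^ 4 ^ (k + 2)

lemma two_le_scale (k : ℕ) : 2 ≤ scale k :=
  le_self_pow₀ one_le_two (pow_pos (by norm_num) _).ne'

lemma four_mul_scale_le {j k : ℕ} (h : j < k) : 4 * scale j ≤ scale k := by
  rw [scale, scale, show (4 : ℝ) = 2 ^ 2 by norm_num, ← pow_add]
  apply pow_le_pow_right₀ one_le_two
  have : 4 ^ (j + 2) * 4 ≤ 4 ^ (k + 2) := by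
    rw [← pow_succ]; exact Nat.pow_le_pow_right (by norm_num) (by omega)
  have : 1 ≤ 4 ^ (j + 2) := Nat.one_le_pow _ _ (by norm_num)
  omega

lemma two_mul_two_pow_le_scale {i k : ℕ} (hi : i ≤ 4 ^ k) : 2 * 2 ^ i ≤ scale k := by
  rw [scale, ← pow_succ']
  apply pow_le_pow_right₀ one_le_two
  have : 1 ≤ 4 ^ k := Nat.one_le_pow _ _ (by norm_num)
  rw [pow_add]
  omega

lemma two_pow_le_ofReal_scale_mul {m k : ℕ} (h : m + (k + 1) ≤ 4 ^ (k + 2)) :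
    (2 : ℝ≥0∞) ^ m ≤ ENNReal.ofReal (scale k) * 2⁻¹ ^ (k + 1) := by
  rw [scale, ENNReal.ofReal_pow zero_le_two, ENNReal.ofReal_ofNat]
  calc (2 : ℝ≥0∞) ^ m = 2 ^ (m + (k + 1)) * 2⁻¹ ^ (k + 1) := by
        rw [pow_add, mul_assoc, ← mul_pow, ENNReal.mul_inv_cancel two_ne_zero ofNat_ne_top,
          one_pow, mul_one]
    _ ≤ _ := by gcongr; exact one_le_two

lemma cluster_univ_le (y : ℕ → ℝ) (k : ℕ) :
    cluster y (4 ^ k) univ ≤ ENNReal.ofReal (scale k) * 2⁻¹ ^ (k + 1) := by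
  have hsum : ∑ i ∈ Finset.range (4 ^ k + 1), 4 ^ i < 4 ^ (4 ^ k + 1) :=
    Nat.geomSum_lt (by norm_num) fun i hi => Finset.mem_range.1 hi
  have hk : k < 4 ^ k := Nat.lt_pow_self (by norm_num)
  refine le_trans ?_ (two_pow_le_ofReal_scale_mul (m := 2 * (4 ^ k + 1)) (by rw [pow_add]; omega))
  rw [cluster_apply, pow_mul]
  simp only [indicator_univ, Pi.one_apply, mul_one]
  exact_mod_cast hsum.le

lemma inv_two_pow_le_ofReal_scale_mul (k : ℕ) :
    (2⁻¹ : ℝ≥0∞) ^ k ≤ ENNReal.ofReal (scale k) * 2⁻¹ ^ (k + 1) := by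
  have hk : k + 1 ≤ 4 ^ (k + 2) :=
    (Nat.lt_pow_self (by norm_num)).trans_le (Nat.pow_le_pow_right (by norm_num) (by omega))
  calc (2⁻¹ : ℝ≥0∞) ^ k ≤ 2 ^ 0 := pow_le_one₀ zero_le (ENNReal.inv_le_one.2 one_le_two)
    _ ≤ _ := two_pow_le_ofReal_scale_mul (by omega)

noncomputable def probes : Measure ℝ :=
  Measure.sum fun k => (2⁻¹ : ℝ≥0∞) ^ k • Measure.dirac (-scale k)

noncomputable def heavies : Measure ℝ :=
  Measure.sum fun k => cluster (fun i => scale k + 2 ^ i) (4 ^ k)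

noncomputable def ω : Measure ℝ := probes + heavies

noncomputable def σ : Measure ℝ := ω.map Neg.neg

lemma exists_mem_of_probes_apply_ne_zero {s : Set ℝ} (h : probes s ≠ 0) : ∃ k, -scale k ∈ s := by
  obtain ⟨k, hk⟩ := not_forall.1 (mt Measure.sum_apply_eq_zero.2 h)
  exact ⟨k, by_contra fun hs => hk (by simp [hs])⟩

lemma exists_mem_of_heavies_apply_ne_zero {s : Set ℝ} (h : heavies s ≠ 0) :
    ∃ k, ∃ i ≤ 4 ^ k, scale k + 2 ^ i ∈ s := by
  obtain ⟨k, hk⟩ := not_forall.1 (mt Measure.sum_apply_eq_zero.2 h)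
  exact ⟨k, exists_mem_of_cluster_apply_ne_zero hk⟩

lemma probes_le_two (s : Set ℝ) : probes s ≤ 2 := by
  calc probes s ≤ probes univ := measure_mono (subset_univ s)
    _ = 2 := by simp [probes, Measure.sum_apply _ MeasurableSet.univ]

lemma ω_Icc_le (L : ℝ) : ω (Icc (-L) L) ≤ 4 * ENNReal.ofReal L := by
  have hprobes : probes (Icc (-L) L) ≤ 2 * ENNReal.ofReal L := by
    refine sum_apply_le_of_univ_le measurableSet_Icc (c := scale) (fun k => ?_) fun k hk => ?_
    · simpa using inv_two_pow_le_ofReal_scale_mul k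
    · have : -scale k ∈ Icc (-L) L := by_contra fun hs => hk (by simp [hs])
      linarith [this.1, two_le_scale k]
  have hheavies : heavies (Icc (-L) L) ≤ 2 * ENNReal.ofReal L := by
    refine sum_apply_le_of_univ_le measurableSet_Icc (c := scale) (fun k => cluster_univ_le _ k)
      fun k hk => ?_
    obtain ⟨i, -, hi⟩ := exists_mem_of_cluster_apply_ne_zero hk
    linarith [hi.2, two_le_scale k, pow_pos (zero_lt_two' ℝ) i]
  calc ω (Icc (-L) L) = probes (Icc (-L) L) + heavies (Icc (-L) L) := Measure.add_apply ..
    _ ≤ 4 * ENNReal.ofReal L := by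
        rw [show (4 : ℝ≥0∞) = 2 + 2 by norm_num, add_mul]; exact add_le_add hprobes hheavies

lemma scale_le_two_mul_sub {a b : ℝ} {j k i : ℕ} (hjk : j ≠ k) (hi : i ≤ 4 ^ j)
    (hj : scale j + 2 ^ i ∈ Icc a b) (hk : scale k ∈ Icc a b) : scale j ≤ 2 * (b - a) := by
  have h2i := two_mul_two_pow_le_scale hi
  rcases hjk.lt_or_gt with h | h
  · linarith [four_mul_scale_le h, hj.1, hk.2, two_le_scale j]
  · linarith [four_mul_scale_le h, hj.2, hk.1, two_le_scale k, pow_pos (zero_lt_two' ℝ) i]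

lemma heavies_Icc_le_of_mem {a b : ℝ} {K : ℕ} (hK : scale K ∈ Icc a b) :
    heavies (Icc a b) ≤ 4 * ENNReal.ofReal ((b - a) ^ 2) := by
  set Q := ENNReal.ofReal ((b - a) ^ 2)
  have hfar : ∀ k, (if k = K then 0 else cluster (fun i => scale k + 2 ^ i) (4 ^ k) (Icc a b))
      ≤ Q * 2⁻¹ ^ k := by
    intro k
    split_ifs with hkK
    · exact zero_le
    refine apply_le_of_univ_le (cluster_univ_le _ k) fun hk => ?_
    obtain ⟨i, hi, hmem⟩ := exists_mem_of_cluster_apply_ne_zero hk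
    have := scale_le_two_mul_sub hkK hi hmem hK
    nlinarith [two_le_scale k]
  calc heavies (Icc a b) = cluster (fun i => scale K + 2 ^ i) (4 ^ K) (Icc a b)
        + ∑' k, if k = K then 0 else cluster (fun i => scale k + 2 ^ i) (4 ^ k) (Icc a b) := by
        rw [heavies, Measure.sum_apply _ measurableSet_Icc]
        convert ENNReal.tsum_eq_add_tsum_ite K
    _ ≤ 2 * Q + ∑' k, Q * 2⁻¹ ^ k :=
        add_le_add (cluster_Icc_le hK.1 _ _) (ENNReal.tsum_le_tsum hfar)
    _ = 4 * Q := by rw [ENNReal.tsum_mul_left, ENNReal.tsum_geometric_two]; ring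

lemma ω_Icc_mul_ω_Icc_neg_le_of_pos {a b : ℝ} (ha : 0 < a) :
    ω (Icc a b) * ω (Icc (-b) (-a)) ≤ 8 * ENNReal.ofReal ((b - a) ^ 2) := by
  have hprobes : probes (Icc a b) = 0 := by
    by_contra h
    obtain ⟨k, hk⟩ := exists_mem_of_probes_apply_ne_zero h
    linarith [hk.1, two_le_scale k]
  have hheavies : heavies (Icc (-b) (-a)) = 0 := by
    by_contra h
    obtain ⟨k, i, -, hk⟩ := exists_mem_of_heavies_apply_ne_zero h
    linarith [hk.2, two_le_scale k, pow_pos (zero_lt_two' ℝ) i]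
  rw [ω, Measure.add_apply, Measure.add_apply, hprobes, hheavies, zero_add, add_zero]
  by_cases h0 : probes (Icc (-b) (-a)) = 0
  · simp [h0]
  obtain ⟨K, hK⟩ := exists_mem_of_probes_apply_ne_zero h0
  calc heavies (Icc a b) * probes (Icc (-b) (-a))
      ≤ 4 * ENNReal.ofReal ((b - a) ^ 2) * 2 :=
        mul_le_mul' (heavies_Icc_le_of_mem ⟨by linarith [hK.2], by linarith [hK.1]⟩)
          (probes_le_two _)
    _ = 8 * ENNReal.ofReal ((b - a) ^ 2) := by ring

lemma ω_Icc_mul_ω_Icc_neg_le (a b : ℝ) :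
    ω (Icc a b) * ω (Icc (-b) (-a)) ≤ 16 * ENNReal.ofReal ((b - a) ^ 2) := by
  rcases lt_or_ge 0 a with ha | ha
  · exact (ω_Icc_mul_ω_Icc_neg_le_of_pos ha).trans (by gcongr; norm_num)
  rcases lt_or_ge b 0 with hb | hb
  · have := ω_Icc_mul_ω_Icc_neg_le_of_pos (b := -a) (neg_pos.2 hb)
    rw [neg_neg, neg_neg, mul_comm, show (-a - -b) = b - a by ring] at this
    exact this.trans (by gcongr; norm_num)
  calc ω (Icc a b) * ω (Icc (-b) (-a))
      ≤ ω (Icc (-(b - a)) (b - a)) * ω (Icc (-(b - a)) (b - a)) :=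
        mul_le_mul' (measure_mono (Icc_subset_Icc (by linarith) (by linarith)))
          (measure_mono (Icc_subset_Icc (by linarith) (by linarith)))
    _ ≤ (4 * ENNReal.ofReal (b - a)) * (4 * ENNReal.ofReal (b - a)) := by
        gcongr <;> exact ω_Icc_le _
    _ = 16 * ENNReal.ofReal ((b - a) ^ 2) := by
        rw [ENNReal.ofReal_pow (by linarith)]; ring

lemma iSup_A2_lt_top :
    (⨆ I : RInterval, ω I.set * σ I.set / ENNReal.ofReal (I.len ^ 2)) < ⊤ := by
  refine lt_of_le_of_lt (iSup_le fun I => ?_) (by norm_num : (16 : ℝ≥0∞) < ⊤)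
  have hlen : (I.c + I.r) - (I.c - I.r) = I.len := by rw [len]; ring
  rw [ENNReal.div_le_iff_le_mul (Or.inl (by simp [len, I.hr.ne'])) (Or.inl ofReal_ne_top), ← hlen]
  calc ω I.set * σ I.set
      ≤ ω (Icc (I.c - I.r) (I.c + I.r)) * ω (Icc (-(I.c + I.r)) (-(I.c - I.r))) :=
        mul_le_mul' (measure_mono Ico_subset_Icc_self)
          (map_neg_apply_le ω measurableSet_Ico Ico_subset_Icc_self)
    _ ≤ _ := ω_Icc_mul_ω_Icc_neg_le _ _

instance : IsLocallyFiniteMeasure ω :=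
  isLocallyFiniteMeasure_of_Icc fun L => (ω_Icc_le L).trans_lt (by finiteness)

instance : IsLocallyFiniteMeasure σ :=
  isLocallyFiniteMeasure_of_Icc fun L => (map_neg_apply_le ω measurableSet_Icc le_rfl).trans_lt
    (by simpa using (ω_Icc_le L).trans_lt (by finiteness))

lemma ω_singleton_neg_scale (k : ℕ) : (2⁻¹ : ℝ≥0∞) ^ k ≤ ω {-scale k} :=
  calc (2⁻¹ : ℝ≥0∞) ^ k = ((2⁻¹ : ℝ≥0∞) ^ k • Measure.dirac (-scale k)) {-scale k} := by simp
    _ ≤ probes {-scale k} := Measure.le_iff'.1 (Measure.le_sum _ k) _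
    _ ≤ ω {-scale k} := by rw [ω, Measure.add_apply]; exact le_self_add

lemma cluster_le_ω (k : ℕ) : cluster (fun i => scale k + 2 ^ i) (4 ^ k) ≤ ω :=
  (Measure.le_sum _ k).trans (Measure.le_add_left le_rfl : heavies ≤ probes + heavies)

lemma iSup_ω_mul_poisson_σ :
    ⨆ I : RInterval, ω I.set / ENNReal.ofReal I.len * poisson I σ = ⊤ := by
  refine iSup_mul_poisson_eq_top ω_singleton_neg_scale (y := fun k i => -(scale k + 2 ^ i))
    (fun k => ?_) fun k i => by simp
  rw [← map_neg_cluster]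
  exact Measure.map_mono (cluster_le_ω k) measurable_neg

lemma iSup_σ_mul_poisson_ω :
    ⨆ I : RInterval, σ I.set / ENNReal.ofReal I.len * poisson I ω = ⊤ := by
  refine iSup_mul_poisson_eq_top (x := scale) (fun k => ?_) cluster_le_ω fun k i => by simp
  rw [σ, Measure.map_apply measurable_neg (measurableSet_singleton _)]
  exact (ω_singleton_neg_scale k).trans (measure_mono (by simp))

end OneTailedA2

/-- There exist locally finite positive Borel measures on `ℝ` satisfying the
classical two-weight `A_2` condition but failing both one-tailed `A_2` conditions. -/
theorem stmt_6 :
    ∃ ω σ : Measure ℝ, IsLocallyFiniteMeasure ω ∧ IsLocallyFiniteMeasure σ ∧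
      (⨆ I : RInterval, ω I.set * σ I.set / ENNReal.ofReal (I.len ^ 2)) < ⊤ ∧
      (⨆ I : RInterval, (ω I.set / ENNReal.ofReal I.len) * poisson I σ) = ⊤ ∧
      (⨆ I : RInterval, (σ I.set / ENNReal.ofReal I.len) * poisson I ω) = ⊤ :=
  ⟨OneTailedA2.ω, OneTailedA2.σ, inferInstance, inferInstance, OneTailedA2.iSup_A2_lt_top,
    OneTailedA2.iSup_ω_mul_poisson_σ, OneTailedA2.iSup_σ_mul_poisson_ω⟩
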